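/- Exponential extinction below the epidemic threshold: let β, μ, α ≥ 0 and N > 0 with βN < μ + α. Let S, I : ℝ → ℝ be differentiable with I' (t) = (βS(t) - μ - α) I(t), I(t) ≥ 0 and S(t) ≤ N for all t ≥ 0. Then I(t) ≤ I(0) · exp((βN - μ - α) t) for all t ≥ 0; in particular I(t) → 0 as t → ∞. -/
import Mathlib


open Filter

/-- **Exponential extinction below the epidemic threshold.**
If β, μ, α ≥ 0, N > 0 with βN < μ + α, and I' = (βS - μ - α)I with I ≥ 0 and
S ≤ N on [0, ∞), then I(t) ≤ I(0)·exp((βN - μ - α)t) for all t ≥ 0, and in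
particular I(t) → 0 as t → ∞. -/
theorem sir_subthreshold_extinction
    (β μ α N : ℝ) (hβ : 0 ≤ β) (hμ : 0 ≤ μ) (hα : 0 ≤ α) (hN : 0 < N)
    (hthr : β * N < μ + α)
    (S I : ℝ → ℝ)
    (hI : ∀ t, 0 ≤ t → HasDerivAt I ((β * S t - μ - α) * I t) t)
    (hInonneg : ∀ t, 0 ≤ t → 0 ≤ I t)
    (hSle : ∀ t, 0 ≤ t → S t ≤ N) :
    (∀ t, 0 ≤ t → I t ≤ I 0 * Real.exp ((β * N - μ - α) * t)) ∧
      Tendsto I atTop (nhds 0) := by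

  have hKneg : β * N - μ - α < 0 := by linarith
  have main : ∀ t, 0 ≤ t → I t ≤ I 0 * Real.exp ((β * N - μ - α) * t) := by
    intro t ht
    have h := le_gronwallBound_of_liminf_deriv_right_le
      (f := I) (f' := fun x => (β * S x - μ - α) * I x) (δ := I 0)
      (K := β * N - μ - α) (ε := 0) (a := 0) (b := t)
      (fun x hx => (hI x hx.1).continuousAt.continuousWithinAt)
      (fun x hx r hr => (hI x hx.1).hasDerivWithinAt.liminf_right_slope_le hr)
      le_rfl
      (fun x hx => by
        have h1 : β * S x ≤ β * N := mul_le_mul_of_nonneg_left (hSle x hx.1) hβ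
        have h2 := hInonneg x hx.1
        have := mul_le_mul_of_nonneg_right
          (by linarith : β * S x - μ - α ≤ β * N - μ - α) h2
        simpa using this)
      t ⟨ht, le_rfl⟩
    rwa [sub_zero, gronwallBound_ε0] at h
  refine ⟨main, ?_⟩
  have hbound : Tendsto (fun t => I 0 * Real.exp ((β * N - μ - α) * t)) atTop (nhds 0) := by
    have := (Real.tendsto_exp_atBot.comp
      (tendsto_id.const_mul_atTop_of_neg hKneg)).const_mul (I 0)
    simpa using this
  refine tendsto_of_tendsto_of_tendsto_of_le_of_le' tendsto_const_nhds hbound ?_ ?_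
  · exact eventually_atTop.2 ⟨0, fun t ht => hInonneg t ht⟩
  · exact eventually_atTop.2 ⟨0, fun t ht => main t ht⟩
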